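/- Let m ≥ 5 and let T be a finite tree (a finite connected acyclic simple graph) with at least one vertex. If the alternating group A_m on m letters acts faithfully on T by graph automorphisms (equivalently, if there is an injective group homomorphism from A_m into the automorphism group of T), then T has a vertex of degree at least m. -/

import Mathlib

/-!
A group acting by automorphisms on a finite tree preserves a nonempty set of at most two
vertices: stripping all leaves is equivariant and leaves a smaller tree, until at most two
vertices remain. Since `A_m` (`m ≥ 5`) is simple of order `m!/2 > (m-1)!`, it acts trivially
on every set of fewer than `m` points. So if all degrees were `< m`, `A_m` would fix a vertex
of that invariant set, then every neighbour of a fixed vertex, hence the whole tree.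
-/

theorem IsSimpleGroup.smul_eq_self_of_card_lt {G X : Type*} [Group G] [IsSimpleGroup G]
    [MulAction G X] [Finite X] (hX : (Nat.card X).factorial < Nat.card G) (g : G) (x : X) :
    g • x = x := by
  rcases IsSimpleGroup.eq_bot_or_eq_top_of_normal _ (MulAction.toPermHom G X).normal_ker
    with hbot | htop
  · have hinj := (MonoidHom.ker_eq_bot_iff _).1 hbot
    have := Nat.card_le_card_of_injective _ hinj
    rw [Nat.card_perm] at this
    omega
  · have hg : MulAction.toPermHom G X g = 1 := (htop ▸ Subgroup.mem_top g : g ∈ _)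
    simpa using congrArg (· x) hg

theorem alternatingGroup.smul_eq_self_of_card_lt {α X : Type*} [Fintype α] [DecidableEq α]
    [MulAction (alternatingGroup α) X] [Finite X] (h5 : 5 ≤ Nat.card α)
    (hX : Nat.card X < Nat.card α) (g : alternatingGroup α) (x : X) : g • x = x := by
  have := alternatingGroup.isSimpleGroup h5
  have : Nontrivial α := Finite.one_lt_card_iff_nontrivial.1 (by omega)
  refine IsSimpleGroup.smul_eq_self_of_card_lt ?_ g x
  have h2 := two_mul_nat_card_alternatingGroup (α := α)
  rw [Nat.card_perm] at h2
  obtain ⟨k, hk⟩ : ∃ k, Nat.card α = k + 1 := ⟨_, (Nat.succ_pred_eq_of_pos (by omega)).symm⟩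
  rw [hk, Nat.factorial_succ] at h2
  have : (Nat.card X).factorial ≤ k.factorial := Nat.factorial_le (by omega)
  have : 0 < k.factorial := Nat.factorial_pos k
  nlinarith

theorem alternatingGroup.smul_eq_self_of_mem {α X : Type*} [Fintype α] [DecidableEq α]
    [MulAction (alternatingGroup α) X] [Finite X] (h5 : 5 ≤ Nat.card α)
    (s : SubMulAction (alternatingGroup α) X) (hs : (s : Set X).ncard < Nat.card α) {x : X}
    (hx : x ∈ s) (g : alternatingGroup α) : g • x = x :=
  congrArg Subtype.val <|
    smul_eq_self_of_card_lt h5 ((Nat.card_coe_set_eq _).trans_lt hs) g ⟨x, hx⟩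

namespace SimpleGraph

variable {V : Type*} {T : SimpleGraph V}

theorem IsTree.exists_not_subsingleton_neighborSet [Finite V] (hT : T.IsTree)
    (h3 : 3 ≤ Nat.card V) : ∃ v, ¬(T.neighborSet v).Subsingleton := by
  classical
  have := Fintype.ofFinite V
  by_contra! hsub
  have hdeg : ∀ v, T.degree v ≤ 1 := fun v => by
    rw [← card_neighborSet_eq_degree, Fintype.card_le_one_iff_subsingleton]
    exact (hsub v).coe_sort
  have hsum : ∑ v, T.degree v ≤ Fintype.card V * 1 :=
    Finset.sum_le_card_nsmul _ _ 1 fun v _ => hdeg v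
  have := hT.card_edgeFinset
  have := T.sum_degrees_eq_twice_card_edges
  rw [Nat.card_eq_fintype_card] at h3
  omega

theorem IsTree.exists_subsingleton_neighborSet [Finite V] [Nontrivial V] (hT : T.IsTree) :
    ∃ v, (T.neighborSet v).Subsingleton := by
  classical
  have := Fintype.ofFinite V
  obtain ⟨v, hv⟩ := hT.exists_vert_degree_one_of_nontrivial
  obtain ⟨w, -, hw⟩ := degree_eq_one_iff_existsUnique_adj.1 hv
  exact ⟨v, fun a ha b hb => (hw a ha).trans (hw b hb).symm⟩

theorem Preconnected.forall_of_adj {P : V → Prop} (hT : T.Preconnected)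
    (hP : ∀ v w, T.Adj v w → P v → P w) {v : V} (hv : P v) (w : V) : P w := by
  obtain ⟨p⟩ := hT v w
  induction p with
  | nil => exact hv
  | cons hadj _ ih => exact ih (hP _ _ hadj hv)

variable {G : Type*} [Group G] [MulAction G V]

def nonLeaves (hadj : ∀ (g : G) v w, T.Adj (g • v) (g • w) ↔ T.Adj v w) : SubMulAction G V where
  carrier := {v | ¬(T.neighborSet v).Subsingleton}
  smul_mem' g v hv hsub := hv fun a ha b hb =>
    MulAction.injective g (hsub ((hadj g v a).2 ha) ((hadj g v b).2 hb))

theorem IsTree.exists_subMulAction_ncard_le_two [Finite V] (hT : T.IsTree)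
    (hadj : ∀ (g : G) v w, T.Adj (g • v) (g • w) ↔ T.Adj v w) :
    ∃ s : SubMulAction G V, (s : Set V).Nonempty ∧ (s : Set V).ncard ≤ 2 := by
  induction h : Nat.card V using Nat.strong_induction_on generalizing V with
  | _ n ih =>
  by_cases hn : n ≤ 2
  · exact ⟨⊤, ⟨hT.nonempty.some, trivial⟩, (Set.ncard_le_card _).trans (h.trans_le hn)⟩
  let S := nonLeaves hadj
  have hS : (S : Set V).Nonempty := hT.exists_not_subsingleton_neighborSet (by omega)
  have : Nontrivial V := Finite.one_lt_card_iff_nontrivial.1 (by omega)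
  have hSV : (S : Set V).ncard < n := by
    obtain ⟨v, hv⟩ := hT.exists_subsingleton_neighborSet
    rw [← h, ← Set.ncard_univ]
    refine Set.ncard_lt_ncard (Set.ssubset_univ_iff.2 fun hSu => ?_)
    exact (hSu ▸ Set.mem_univ v : v ∈ (S : Set V)) hv
  have hTS : (T.induce (S : Set V)).IsTree :=
    ⟨(connected_iff _).2
      ⟨hT.connected.preconnected.induce_of_degree_eq_one fun _ hv => not_not.1 hv, hS.to_subtype⟩,
      hT.isAcyclic.induce _⟩
  obtain ⟨s, hs, hs2⟩ := ih _ hSV hTS (fun g v w => hadj g v w) (Nat.card_coe_set_eq _)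
  refine ⟨{ carrier := Subtype.val '' (s : Set S), smul_mem' := ?_ }, hs.image _,
    (Set.ncard_image_of_injective _ Subtype.val_injective).trans_le hs2⟩
  rintro g _ ⟨x, hx, rfl⟩
  exact ⟨g • x, s.smul_mem g hx, rfl⟩

end SimpleGraph

/-- If the alternating group on `m ≥ 5` letters acts faithfully by graph automorphisms
on a finite tree `T`, then `T` has a vertex of degree at least `m`. -/
theorem statement15 {V : Type} [Fintype V] (T : SimpleGraph V) (hT : T.IsTree)
    (m : ℕ) (hm : 5 ≤ m)
    (φ : alternatingGroup (Fin m) →* Equiv.Perm V)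
    (hinj : Function.Injective φ)
    (hadj : ∀ g : alternatingGroup (Fin m), ∀ v w : V, T.Adj v w ↔ T.Adj (φ g v) (φ g w)) :
    ∃ v : V, m ≤ (T.neighborSet v).ncard := by
  by_contra! hdeg
  let _ := MulAction.compHom V φ
  have hsmul_adj (g : alternatingGroup (Fin m)) (v w : V) : T.Adj (g • v) (g • w) ↔ T.Adj v w :=
    (hadj g v w).symm
  have hm' : 5 ≤ Nat.card (Fin m) := by rwa [Nat.card_fin]
  obtain ⟨s, ⟨x, hx⟩, hs⟩ := hT.exists_subMulAction_ncard_le_two hsmul_adj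
  have hfix : ∀ (v : V) (g : alternatingGroup (Fin m)), g • v = v := by
    refine hT.connected.preconnected.forall_of_adj (fun v w hvw hv => ?_)
      (alternatingGroup.smul_eq_self_of_mem hm' s (by rw [Nat.card_fin]; omega) hx)
    let N : SubMulAction (alternatingGroup (Fin m)) V :=
      { carrier := T.neighborSet v
        smul_mem' := fun g w hw => hv g ▸ (hsmul_adj g v w).2 hw }
    exact alternatingGroup.smul_eq_self_of_mem hm' N (by rw [Nat.card_fin]; exact hdeg v) hvw
  have : Nontrivial (alternatingGroup (Fin m)) :=
    alternatingGroup.nontrivial_of_three_le_card (by rw [Nat.card_fin]; omega)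
  obtain ⟨g, hg⟩ := exists_ne (1 : alternatingGroup (Fin m))
  exact hg (hinj (Equiv.ext fun v => (hfix v g).trans (by simp)))
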